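/- The harmonic mapping F(z) = z − conj(z)²/6 belongs to K_H: it is a univalent, sense-preserving harmonic mapping of the unit disk 𝔻 with F(0) = 0 and F_z(0) = 1 whose image F(𝔻) is a convex domain. -/

import Mathlib

open Complex MeasureTheory Filter Set Metric Topology

noncomputable section

/-- The open unit disk in the complex plane. -/
def unitDisk : Set ℂ := Metric.ball 0 1

/-- A harmonic mapping on the unit disk: `F = h + conj g` with `h`, `g` analytic on `𝔻`. -/
def IsHarmonicMapOn (F : ℂ → ℂ) : Prop :=
  ∃ h g : ℂ → ℂ, DifferentiableOn ℂ h unitDisk ∧ DifferentiableOn ℂ g unitDisk ∧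
    ∀ z ∈ unitDisk, F z = h z + (starRingEnd ℂ) (g z)

/-- Wirtinger derivative `f_z = (∂_x f - i ∂_y f)/2`. -/
def wderivZ (f : ℂ → ℂ) (z : ℂ) : ℂ :=
  (fderiv ℝ f z 1 - Complex.I * fderiv ℝ f z Complex.I) / 2

/-- Wirtinger derivative `f_z̄ = (∂_x f + i ∂_y f)/2`. -/
def wderivZBar (f : ℂ → ℂ) (z : ℂ) : ℂ :=
  (fderiv ℝ f z 1 + Complex.I * fderiv ℝ f z Complex.I) / 2

/-- Jacobian `J_f = |f_z|² - |f_z̄|²`. -/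
def jacDet (f : ℂ → ℂ) (z : ℂ) : ℝ := ‖wderivZ f z‖ ^ 2 - ‖wderivZBar f z‖ ^ 2

/-- Closed half-line starting at `a` in direction `v`. -/
def closedHalfLine (a v : ℂ) : Set ℂ := {w | ∃ t : ℝ, 0 ≤ t ∧ w = a + t • v}

/-- Open half-line starting at `a` in direction `v`. -/
def openHalfLine (a v : ℂ) : Set ℂ := {w | ∃ t : ℝ, 0 < t ∧ w = a + t • v}

/-- A set is close-to-convex if its complement is a union of closed half-lines whose
corresponding open half-lines are pairwise disjoint. -/
def IsCloseToConvexDomain (D : Set ℂ) : Prop :=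
  ∃ (ι : Type) (a v : ι → ℂ), (∀ i, v i ≠ 0) ∧
    Dᶜ = ⋃ i, closedHalfLine (a i) (v i) ∧
    (Pairwise fun i j => Disjoint (openHalfLine (a i) (v i)) (openHalfLine (a j) (v j)))

/-- Membership in the class `K_H` of convex univalent sense-preserving normalized
harmonic mappings of the unit disk. -/
def IsKH (F : ℂ → ℂ) : Prop :=
  IsHarmonicMapOn F ∧ Set.InjOn F unitDisk ∧ (∀ z ∈ unitDisk, 0 < jacDet F z) ∧
    F 0 = 0 ∧ wderivZ F 0 = 1 ∧ Convex ℝ (F '' unitDisk)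

/-- A bounded Jordan domain with rectifiable boundary. -/
def IsBoundedRectifiableJordanDomain (Ω : Set ℂ) : Prop :=
  IsOpen Ω ∧ IsConnected Ω ∧ Bornology.IsBounded Ω ∧
    ∃ γ : ℝ → ℂ, ContinuousOn γ (Set.Icc 0 1) ∧ Set.InjOn γ (Set.Ico 0 1) ∧
      γ 0 = γ 1 ∧ γ '' Set.Icc 0 1 = frontier Ω ∧ eVariationOn γ (Set.Icc 0 1) ≠ ⊤

/-- `F(z) = o(1/(1-|z|))` as `|z| → 1⁻`, i.e. `(1-|z|) F(z) → 0`. -/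
def LittleOBoundary (F : ℂ → ℂ) : Prop :=
  Filter.Tendsto (fun z : ℂ => ((1 : ℝ) - ‖z‖) • F z)
    (Filter.comap (fun z : ℂ => ‖z‖) (nhdsWithin 1 (Set.Iio 1))) (nhds 0)

/-- `f` has unrestricted boundary limit `L` at the boundary point `e^{iθ}`. -/
def HasBoundaryLimitAt (f : ℂ → ℂ) (θ : ℝ) (L : ℂ) : Prop :=
  Filter.Tendsto f (nhdsWithin (Complex.exp (Complex.I * θ)) unitDisk) (nhds L)

/-- The boundary function of `f` is continuous at `e^{iθ}`:
the unrestricted limit of `f` exists at `e^{iθ}`. -/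
def BoundaryContinuousAt (f : ℂ → ℂ) (θ : ℝ) : Prop := ∃ L, HasBoundaryLimitAt f θ L

/-- `fstar` is (a.e.) the boundary function of `f` on the unit circle,
parametrized by angle. -/
def IsBoundaryFunction (f : ℂ → ℂ) (fstar : ℝ → ℂ) : Prop :=
  ∀ᵐ t : ℝ ∂(volume : Measure ℝ), HasBoundaryLimitAt f t (fstar t)

/-- `φ` has a jump at `θ₀`: the essential one-sided limits exist, are finite and differ. -/
def HasEssJumpAt (φ : ℝ → ℂ) (θ₀ : ℝ) : Prop :=
  ∃ L R : ℂ, L ≠ R ∧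
    Filter.Tendsto φ ((nhdsWithin θ₀ (Set.Iio θ₀)) ⊓ MeasureTheory.ae (volume : Measure ℝ)) (nhds L) ∧
    Filter.Tendsto φ ((nhdsWithin θ₀ (Set.Ioi θ₀)) ⊓ MeasureTheory.ae (volume : Measure ℝ)) (nhds R)

/-!
Write `F = z + c z̄²`. For `z₁, z₂ ∈ 𝔻` and weights `a + b = 1`,
`a F(z₁) + b F(z₂) = F(z) + c u` with `z = a z₁ + b z₂` and `u = a b (z̄₁ - z̄₂)²`, while
`|z|² + |u| = a |z₁|² + b |z₂|² < 1`. When `|c| ≤ 1/6` the equation `F(z + δ) = F(z) + c u` is the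
fixed-point equation of a contraction of the closed disc of radius `|u|/3`, and `|z| + |u|/3 < 1`
keeps its solution `z + δ` in `𝔻`; so `F(𝔻)` is convex.
-/

open ComplexConjugate

theorem exists_isFixedPt_of_lipschitzOnWith {α : Type*} [MetricSpace α] {K : NNReal} {s : Set α}
    {T : α → α} (hK : K < 1) (hs : IsComplete s) (hTs : MapsTo T s s)
    (hT : LipschitzOnWith K T s) {x : α} (hx : x ∈ s) : ∃ y ∈ s, Function.IsFixedPt T y := by
  obtain ⟨y, hys, hy, -⟩ := ContractingWith.exists_fixedPoint' hs hTs
    ⟨hK, lipschitzOnWith_iff_restrict.mp hT⟩ hx (edist_ne_top _ _)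
  exact ⟨y, hys, hy⟩

theorem norm_smul_add_smul_sq {E : Type*} [NormedAddCommGroup E] [InnerProductSpace ℝ E]
    {a b : ℝ} (hab : a + b = 1) (x y : E) :
    ‖a • x + b • y‖ ^ 2 = a * ‖x‖ ^ 2 + b * ‖y‖ ^ 2 - a * b * ‖x - y‖ ^ 2 := by
  rw [norm_add_sq_real, norm_sub_sq_real, norm_smul, norm_smul, real_inner_smul_left,
    real_inner_smul_right, mul_pow, mul_pow, Real.norm_eq_abs, Real.norm_eq_abs, sq_abs, sq_abs]
  obtain rfl := eq_sub_of_add_eq hab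
  ring

section AddConj

variable {h g : ℂ → ℂ} {z : ℂ}

theorem fderiv_add_conj_apply (hh : DifferentiableAt ℂ h z) (hg : DifferentiableAt ℂ g z)
    (v : ℂ) :
    fderiv ℝ (fun w => h w + conj (g w)) z v = deriv h z * v + conj (deriv g z * v) := by
  have hsum : HasFDerivAt (fun w => h w + conj (g w)) _ z :=
    (hh.hasDerivAt.hasFDerivAt.restrictScalars ℝ).add
      (conjCLE.hasFDerivAt.comp z (hg.hasDerivAt.hasFDerivAt.restrictScalars ℝ))
  rw [hsum.fderiv]
  simp [mul_comm]

theorem wderivZ_add_conj (hh : DifferentiableAt ℂ h z) (hg : DifferentiableAt ℂ g z) :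
    wderivZ (fun w => h w + conj (g w)) z = deriv h z := by
  simp only [wderivZ, fderiv_add_conj_apply hh hg, map_mul, conj_I, map_one]
  linear_combination (-(deriv h z) / 2 + conj (deriv g z) / 2) * I_mul_I

theorem wderivZBar_add_conj (hh : DifferentiableAt ℂ h z) (hg : DifferentiableAt ℂ g z) :
    wderivZBar (fun w => h w + conj (g w)) z = conj (deriv g z) := by
  simp only [wderivZBar, fderiv_add_conj_apply hh hg, map_mul, conj_I, map_one]
  linear_combination (deriv h z / 2 - conj (deriv g z) / 2) * I_mul_I

theorem jacDet_add_conj (hh : DifferentiableAt ℂ h z) (hg : DifferentiableAt ℂ g z) :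
    jacDet (fun w => h w + conj (g w)) z = ‖deriv h z‖ ^ 2 - ‖deriv g z‖ ^ 2 := by
  rw [jacDet, wderivZ_add_conj hh hg, wderivZBar_add_conj hh hg, norm_conj]

end AddConj

def quadHarmonicMap (c z : ℂ) : ℂ := z + c * conj z ^ 2

namespace quadHarmonicMap

variable {c : ℂ}

theorem eq_add_conj (c : ℂ) : quadHarmonicMap c = fun w => w + conj (conj c * w ^ 2) := by
  funext w
  simp [quadHarmonicMap]

theorem isHarmonicMapOn (c : ℂ) : IsHarmonicMapOn (quadHarmonicMap c) :=
  ⟨id, fun w => conj c * w ^ 2, differentiableOn_id, by fun_prop,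
    fun w _ => congrFun (eq_add_conj c) w⟩

theorem map_zero (c : ℂ) : quadHarmonicMap c 0 = 0 := by
  simp [quadHarmonicMap]

theorem wderivZ_eq (c z : ℂ) : wderivZ (quadHarmonicMap c) z = 1 := by
  rw [eq_add_conj, wderivZ_add_conj (h := fun w => w) (by fun_prop) (by fun_prop), deriv_id'']

theorem jacDet_eq (c z : ℂ) : jacDet (quadHarmonicMap c) z = 1 - 4 * ‖c‖ ^ 2 * ‖z‖ ^ 2 := by
  have hg : deriv (fun w => conj c * w ^ 2) z = conj c * (2 * z) := by simp
  rw [eq_add_conj, jacDet_add_conj (h := fun w => w) (by fun_prop) (by fun_prop), deriv_id'', hg,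
    norm_one, norm_mul, norm_mul, norm_conj, Complex.norm_ofNat]
  ring

theorem jacDet_pos (hc : ‖c‖ ≤ 1 / 2) {z : ℂ} (hz : z ∈ unitDisk) :
    0 < jacDet (quadHarmonicMap c) z := by
  rw [unitDisk, mem_ball_zero_iff] at hz
  rw [jacDet_eq]
  have : ‖c‖ * ‖z‖ < 1 / 2 := by nlinarith [norm_nonneg c, norm_nonneg z]
  nlinarith [mul_nonneg (norm_nonneg c) (norm_nonneg z)]

theorem injOn (hc : ‖c‖ ≤ 1 / 2) : InjOn (quadHarmonicMap c) unitDisk := by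
  intro z₁ hz₁ z₂ hz₂ heq
  rw [unitDisk, mem_ball_zero_iff] at hz₁ hz₂
  have hdiff : z₁ - z₂ = -c * conj (z₁ - z₂) * (conj z₁ + conj z₂) := by
    simp only [quadHarmonicMap] at heq
    rw [map_sub]
    linear_combination heq
  have hsum : ‖c‖ * ‖conj z₁ + conj z₂‖ < 1 := by
    have := norm_add_le (conj z₁) (conj z₂)
    rw [norm_conj, norm_conj] at this
    calc ‖c‖ * ‖conj z₁ + conj z₂‖ ≤ 1 / 2 * (‖z₁‖ + ‖z₂‖) :=
          mul_le_mul hc this (norm_nonneg _) (by norm_num)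
      _ < 1 := by linarith
  by_contra hne
  have hpos : 0 < ‖z₁ - z₂‖ := norm_pos_iff.mpr (sub_ne_zero.mpr hne)
  have := congrArg norm hdiff
  rw [norm_mul, norm_mul, norm_neg, norm_conj] at this
  nlinarith

theorem exists_map_add_eq (hc : ‖c‖ ≤ 1 / 6) {z u : ℂ} (hz : ‖z‖ ≤ 1) (hu : ‖u‖ ≤ 3) :
    ∃ δ, ‖δ‖ ≤ ‖u‖ / 3 ∧ quadHarmonicMap c (z + δ) = quadHarmonicMap c z + c * u := by
  set r := ‖u‖ / 3 with hr_def
  have hr : r ≤ 1 := by linarith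
  set T : ℂ → ℂ := fun δ => c * (u - 2 * conj z * conj δ - conj δ ^ 2)
  have hmaps : MapsTo T (closedBall 0 r) (closedBall 0 r) := by
    intro δ hδ
    rw [mem_closedBall_zero_iff] at hδ ⊢
    have hbound : ‖u - 2 * conj z * conj δ - conj δ ^ 2‖ ≤ ‖u‖ + 2 * ‖z‖ * ‖δ‖ + ‖δ‖ ^ 2 := by
      refine (norm_sub_le _ _).trans (add_le_add ((norm_sub_le _ _).trans_eq ?_) ?_) <;> simp
    calc ‖T δ‖ ≤ 1 / 6 * (‖u‖ + 2 * ‖z‖ * ‖δ‖ + ‖δ‖ ^ 2) := by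
          rw [norm_mul]; exact mul_le_mul hc hbound (norm_nonneg _) (by norm_num)
      _ ≤ 1 / 6 * (3 * r + 2 * r + r) := by
          have hzδ : ‖z‖ * ‖δ‖ ≤ r := by nlinarith [norm_nonneg z, norm_nonneg δ]
          have hδ2 : ‖δ‖ ^ 2 ≤ r := by nlinarith [norm_nonneg δ]
          linarith
      _ = r := by ring
  have hlip : LipschitzOnWith (Real.toNNReal (2 / 3)) T (closedBall 0 r) := by
    refine LipschitzOnWith.of_dist_le' fun δ hδ δ' hδ' => ?_
    rw [mem_closedBall_zero_iff] at hδ hδ'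
    have hfactor : T δ - T δ' = -c * conj (δ - δ') * (2 * conj z + conj δ + conj δ') := by
      simp only [T, map_sub]
      ring
    have hsum : ‖2 * conj z + conj δ + conj δ'‖ ≤ 4 := by
      refine (norm_add₃_le).trans ?_
      simp only [norm_mul, norm_conj, Complex.norm_ofNat]
      linarith
    rw [dist_eq_norm, dist_eq_norm, hfactor, norm_mul, norm_mul, norm_neg, norm_conj]
    calc ‖c‖ * ‖δ - δ'‖ * ‖2 * conj z + conj δ + conj δ'‖ ≤ 1 / 6 * ‖δ - δ'‖ * 4 := by
          gcongr
      _ = 2 / 3 * ‖δ - δ'‖ := by ring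
  obtain ⟨δ, hδ, hfix⟩ := exists_isFixedPt_of_lipschitzOnWith (by norm_num)
    isClosed_closedBall.isComplete hmaps hlip (mem_closedBall_self (by positivity))
  refine ⟨δ, mem_closedBall_zero_iff.mp hδ, ?_⟩
  have hfix : T δ = δ := hfix
  simp only [T] at hfix
  simp only [quadHarmonicMap, map_add]
  linear_combination -hfix

theorem smul_add_smul_eq (c : ℂ) {a b : ℝ} (hab : a + b = 1) (z₁ z₂ : ℂ) :
    a • quadHarmonicMap c z₁ + b • quadHarmonicMap c z₂ =
      quadHarmonicMap c (a • z₁ + b • z₂) + c * (a * b * (conj z₁ - conj z₂) ^ 2) := by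
  obtain rfl := eq_sub_of_add_eq hab
  simp only [quadHarmonicMap, real_smul, map_add, map_mul, conj_ofReal]
  push_cast
  ring

theorem convex_image (hc : ‖c‖ ≤ 1 / 6) : Convex ℝ (quadHarmonicMap c '' unitDisk) := by
  rintro _ ⟨z₁, hz₁, rfl⟩ _ ⟨z₂, hz₂, rfl⟩ a b ha hb hab
  rw [unitDisk, mem_ball_zero_iff] at hz₁ hz₂
  set z := a • z₁ + b • z₂
  set u : ℂ := a * b * (conj z₁ - conj z₂) ^ 2
  have hu : ‖u‖ = a * b * ‖z₁ - z₂‖ ^ 2 := by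
    simp [u, ← map_sub, abs_of_nonneg ha, abs_of_nonneg hb]
  have hz : ‖z‖ ^ 2 = a * ‖z₁‖ ^ 2 + b * ‖z₂‖ ^ 2 - ‖u‖ := by
    rw [hu]; exact norm_smul_add_smul_sq hab z₁ z₂
  have hmean : a * ‖z₁‖ ^ 2 + b * ‖z₂‖ ^ 2 < 1 := by
    simpa using convex_Iio (1 : ℝ) (pow_lt_one₀ (norm_nonneg _) hz₁ two_ne_zero)
      (pow_lt_one₀ (norm_nonneg _) hz₂ two_ne_zero) ha hb hab
  have hzu : ‖z‖ + ‖u‖ / 3 < 1 := by nlinarith [norm_nonneg z, norm_nonneg u]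
  obtain ⟨δ, hδ, hFδ⟩ := exists_map_add_eq hc (z := z) (u := u)
    (by nlinarith [norm_nonneg u]) (by nlinarith [norm_nonneg z])
  refine ⟨z + δ, ?_, ?_⟩
  · rw [unitDisk, mem_ball_zero_iff]
    exact (norm_add_le _ _).trans_lt (by linarith)
  · rw [hFδ, smul_add_smul_eq c hab]

end quadHarmonicMap

/-- The harmonic mapping `F(z) = z - conj(z)²/6` belongs to `K_H`: it is a univalent,
sense-preserving harmonic mapping of `𝔻` with `F(0) = 0`, `F_z(0) = 1` and convex image. -/
theorem example_mapping_mem_KH :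
    IsKH (fun z : ℂ => z - (starRingEnd ℂ z) ^ 2 / 6) := by
  have hF : (fun z : ℂ => z - (starRingEnd ℂ z) ^ 2 / 6) = quadHarmonicMap (-1 / 6) := by
    funext z
    simp only [quadHarmonicMap]
    ring
  have hc : ‖(-1 / 6 : ℂ)‖ = 1 / 6 := by norm_num
  rw [hF]
  exact ⟨quadHarmonicMap.isHarmonicMapOn _, quadHarmonicMap.injOn (by linarith),
    fun z hz => quadHarmonicMap.jacDet_pos (by linarith) hz, quadHarmonicMap.map_zero _,
    quadHarmonicMap.wderivZ_eq _ 0, quadHarmonicMap.convex_image hc.le⟩
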